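/- arXiv:1604.03118 — 3 statements merged into one kernel-verified Lean document; each statement's English description precedes it below -/
import Mathlib

section
/- Let I, J be finite sets with I ≠ J, and let K̃ be a fixed subset of I ∩ J. Then the number of pairs (Ĩ, J̃) with Ĩ ⊆ I, J̃ ⊆ J, Ĩ ∩ J̃ = K̃ and |Ĩ| + |J̃| even equals the number of such pairs with |Ĩ| + |J̃| odd. Equivalently, ∑_{Ĩ⊆I, J̃⊆J, Ĩ∩J̃=K̃} (-1)^{|Ĩ|+|J̃|} = 0. -/
open Finset

lemma aux_sum {α : Type*} [DecidableEq α] (I B K : Finset α) (x : α)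
    (hx : x ∈ I) (hxB : x ∉ B) :
    ∑ A ∈ I.powerset, (if A ∩ B = K then ((-1 : ℤ)) ^ A.card else 0) = 0 := by
  apply Finset.sum_involution (fun A _ => if x ∈ A then A.erase x else insert x A)
  · intro A _
    by_cases hxA : x ∈ A
    · have h1 : (A.erase x) ∩ B = A ∩ B := by
        rw [Finset.erase_inter, Finset.erase_eq_of_notMem (by simp [hxB])]
      have h2 : (A.erase x).card = A.card - 1 := Finset.card_erase_of_mem hxA
      have h3 : A.card ≠ 0 := Finset.card_ne_zero_of_mem hxA
      simp only [hxA, if_true, h1, h2]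
      split
      · rw [← Nat.succ_pred_eq_of_pos (Nat.pos_of_ne_zero h3), pow_succ]
        simp [Nat.succ_sub_one]
      · ring
    · have h1 : (insert x A) ∩ B = A ∩ B := Finset.insert_inter_of_notMem hxB
      have h2 : (insert x A).card = A.card + 1 := Finset.card_insert_of_notMem hxA
      simp only [hxA, if_false, h1, h2]
      split
      · rw [pow_succ]; ring
      · ring
  · intro A _ _
    by_cases hxA : x ∈ A
    · simp only [hxA, if_true]
      intro h
      exact (h ▸ Finset.notMem_erase x A) hxA
    · simp only [hxA, if_false]
      intro h
      exact hxA (h ▸ Finset.mem_insert_self x A)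
  · intro A hA
    by_cases hxA : x ∈ A
    · simp [hxA, Finset.insert_erase hxA]
    · simp [hxA, Finset.erase_insert hxA]
  · intro A hA
    simp only [Finset.mem_powerset] at *
    by_cases hxA : x ∈ A
    · simp only [hxA, if_true]
      exact (Finset.erase_subset x A).trans hA
    · simp only [hxA, if_false]
      exact Finset.insert_subset hx hA

/-- The signed count `𝒟(I,J,K)` of pairs `(A,B)` with `A ⊆ I`, `B ⊆ J`,
`A ∩ B = K` vanishes when `I ≠ J`. -/
theorem stmt_1 {α : Type*} [DecidableEq α] (I J K : Finset α)
    (hK : K ⊆ I ∩ J) (hIJ : I ≠ J) :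
    ∑ A ∈ I.powerset, ∑ B ∈ J.powerset,
      (if A ∩ B = K then ((-1 : ℤ)) ^ (A.card + B.card) else 0) = 0 := by
  have key : (∃ x, x ∈ I ∧ x ∉ J) ∨ (∃ x, x ∈ J ∧ x ∉ I) := by
    by_contra h
    push_neg at h
    exact hIJ (Finset.Subset.antisymm (fun a ha => h.1 a ha) (fun a ha => h.2 a ha))
  rcases key with ⟨x, hxI, hxJ⟩ | ⟨x, hxJ, hxI⟩
  · rw [Finset.sum_comm]
    apply Finset.sum_eq_zero
    intro B hB
    have hxB : x ∉ B := fun h => hxJ (Finset.mem_powerset.mp hB h)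
    have := aux_sum I B K x hxI hxB
    calc ∑ A ∈ I.powerset, (if A ∩ B = K then ((-1:ℤ)) ^ (A.card + B.card) else 0)
        = (-1:ℤ) ^ B.card * ∑ A ∈ I.powerset, (if A ∩ B = K then ((-1:ℤ)) ^ A.card else 0) := by
          rw [Finset.mul_sum]
          apply Finset.sum_congr rfl
          intro A _
          split <;> [rw [pow_add]; ring] <;> ring
      _ = 0 := by rw [this, mul_zero]
  · apply Finset.sum_eq_zero
    intro A hA
    have hxA : x ∉ A := fun h => hxI (Finset.mem_powerset.mp hA h)
    have := aux_sum J A K x hxJ hxA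
    calc ∑ B ∈ J.powerset, (if A ∩ B = K then ((-1:ℤ)) ^ (A.card + B.card) else 0)
        = (-1:ℤ) ^ A.card * ∑ B ∈ J.powerset, (if B ∩ A = K then ((-1:ℤ)) ^ B.card else 0) := by
          rw [Finset.mul_sum]
          apply Finset.sum_congr rfl
          intro B _
          rw [Finset.inter_comm]
          split <;> [rw [pow_add]; ring] <;> ring
      _ = 0 := by rw [this, mul_zero]
end

section
/- Let V be a real inner product space, S a finite set of size N, and {ω_I}_{I⊆S, 1≤|I|≤h} self-adjoint pairwise orthogonal idempotents summing to the identity on V. Let O_x (for x ∈ S) be linear isometries of V satisfying O_x ω_I = ω_I O_x for all I, and O_x ω_I = ω_I whenever x ∉ I or |I| = 1. Then for any s ∈ V with ‖s‖ ≤ 1: ∑_{x∈S} ‖(id − O_x) s‖² ≤ 4h. -/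
open RealInnerProductSpace

lemma pyth_aux {V : Type*} [NormedAddCommGroup V] [InnerProductSpace ℝ V] {ι : Type*}
    (t : Finset ι) (f : ι → V)
    (ho : ∀ i ∈ t, ∀ j ∈ t, i ≠ j → ⟪f i, f j⟫ = 0) :
    ‖∑ i ∈ t, f i‖ ^ 2 = ∑ i ∈ t, ‖f i‖ ^ 2 := by
  rw [← real_inner_self_eq_norm_sq, sum_inner]
  refine Finset.sum_congr rfl fun i hi => ?_
  rw [inner_sum, ← real_inner_self_eq_norm_sq]
  exact Finset.sum_eq_single_of_mem i hi fun j hj hji => ho i hi j hj (Ne.symm hji)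

/-- Key theory-dependent bound in the Grover lower bound: in a theory with
maximal order of interference `h`, `∑_{x ∈ S} ‖(id − O_x) s‖² ≤ 4h`. -/
theorem stmt_6 {α : Type*} [DecidableEq α] {V : Type*} [NormedAddCommGroup V]
    [InnerProductSpace ℝ V]
    (S : Finset α) (h : ℕ)
    (ω : Finset α → Module.End ℝ V)
    (hsa : ∀ I ∈ S.powerset.filter (fun I => 1 ≤ I.card ∧ I.card ≤ h),
      ∀ v w : V, ⟪v, ω I w⟫ = ⟪ω I v, w⟫)
    (horth : ∀ I ∈ S.powerset.filter (fun I => 1 ≤ I.card ∧ I.card ≤ h),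
      ∀ J ∈ S.powerset.filter (fun I => 1 ≤ I.card ∧ I.card ≤ h),
      ω I * ω J = if I = J then ω I else 0)
    (hsum : ∑ I ∈ S.powerset.filter (fun I => 1 ≤ I.card ∧ I.card ≤ h), ω I = 1)
    (O : α → Module.End ℝ V)
    (hiso : ∀ x ∈ S, ∀ v : V, ‖O x v‖ = ‖v‖)
    (hcomm : ∀ x ∈ S, ∀ I ∈ S.powerset.filter (fun I => 1 ≤ I.card ∧ I.card ≤ h),
      O x * ω I = ω I * O x)
    (htriv : ∀ x ∈ S, ∀ I ∈ S.powerset.filter (fun I => 1 ≤ I.card ∧ I.card ≤ h),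
      (x ∉ I ∨ I.card = 1) → O x * ω I = ω I)
    (s : V) (hs : ‖s‖ ≤ 1) :
    ∑ x ∈ S, ‖s - O x s‖ ^ 2 ≤ 4 * (h : ℝ) := by
  set F := S.powerset.filter (fun I => 1 ≤ I.card ∧ I.card ≤ h) with hF
  -- orthogonality of ranges
  have h1 : ∀ I ∈ F, ∀ J ∈ F, I ≠ J → ∀ v w : V, ⟪ω I v, ω J w⟫ = 0 := by
    intro I hI J hJ hIJ v w
    have hz : ω I * ω J = 0 := by rw [horth I hI J hJ, if_neg hIJ]
    have : ⟪v, ω I (ω J w)⟫ = ⟪ω I v, ω J w⟫ := hsa I hI v (ω J w)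
    rw [← this]
    have : ω I (ω J w) = (ω I * ω J) w := rfl
    rw [this, hz]
    simp
  -- idempotency
  have hidem : ∀ I ∈ F, ∀ v : V, ω I (ω I v) = ω I v := by
    intro I hI v
    have : ω I * ω I = ω I := by rw [horth I hI I hI, if_pos rfl]
    calc ω I (ω I v) = (ω I * ω I) v := rfl
      _ = ω I v := by rw [this]
  -- the b terms lie in the range of ω I
  have hrange : ∀ x ∈ S, ∀ I ∈ F,
      ω I (ω I s - O x (ω I s)) = ω I s - O x (ω I s) := by
    intro x hx I hI
    rw [map_sub, hidem I hI]
    have : ω I (O x (ω I s)) = O x (ω I (ω I s)) := by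
      have := hcomm x hx I hI
      calc ω I (O x (ω I s)) = (ω I * O x) (ω I s) := rfl
        _ = (O x * ω I) (ω I s) := by rw [this]
        _ = O x (ω I (ω I s)) := rfl
    rw [this, hidem I hI]
  have horthb : ∀ x ∈ S, ∀ I ∈ F, ∀ J ∈ F, I ≠ J →
      ⟪ω I s - O x (ω I s), ω J s - O x (ω J s)⟫ = 0 := by
    intro x hx I hI J hJ hIJ
    rw [← hrange x hx I hI, ← hrange x hx J hJ]
    exact h1 I hI J hJ hIJ _ _
  -- decomposition of s
  have hdec : s = ∑ I ∈ F, ω I s := by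
    have := congrFun (congrArg DFunLike.coe hsum) s
    simpa [Module.End.one_apply] using this.symm
  have hdecx : ∀ x ∈ S, s - O x s = ∑ I ∈ F, (ω I s - O x (ω I s)) := by
    intro x hx
    rw [Finset.sum_sub_distrib, ← map_sum, ← hdec]
  -- vanishing of b when x ∉ I
  have hb0 : ∀ x ∈ S, ∀ I ∈ F, x ∉ I → ω I s - O x (ω I s) = 0 := by
    intro x hx I hI hxI
    have := htriv x hx I hI (Or.inl hxI)
    have h2 : O x (ω I s) = ω I s := by
      calc O x (ω I s) = (O x * ω I) s := rfl
        _ = ω I s := by rw [this]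
    rw [h2, sub_self]
  -- norm bound on b
  have hbnorm : ∀ x ∈ S, ∀ I ∈ F, ‖ω I s - O x (ω I s)‖ ^ 2 ≤ 4 * ‖ω I s‖ ^ 2 := by
    intro x hx I hI
    have h2 : ‖ω I s - O x (ω I s)‖ ≤ 2 * ‖ω I s‖ := by
      calc ‖ω I s - O x (ω I s)‖ ≤ ‖ω I s‖ + ‖O x (ω I s)‖ := norm_sub_le _ _
        _ = 2 * ‖ω I s‖ := by rw [hiso x hx]; ring
    calc ‖ω I s - O x (ω I s)‖ ^ 2 ≤ (2 * ‖ω I s‖) ^ 2 := by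
          exact pow_le_pow_left₀ (norm_nonneg _) h2 2
      _ = 4 * ‖ω I s‖ ^ 2 := by ring
  -- Pythagoras for s
  have hpyth_s : ∑ I ∈ F, ‖ω I s‖ ^ 2 = ‖s‖ ^ 2 := by
    conv_rhs => rw [hdec]
    exact (pyth_aux F (fun I => ω I s) (fun I hI J hJ hIJ => h1 I hI J hJ hIJ s s)).symm
  -- main computation
  have key : ∑ x ∈ S, ‖s - O x s‖ ^ 2
      = ∑ I ∈ F, ∑ x ∈ S, ‖ω I s - O x (ω I s)‖ ^ 2 := by
    rw [← Finset.sum_comm]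
    refine Finset.sum_congr rfl fun x hx => ?_
    rw [hdecx x hx, pyth_aux F _ (fun I hI J hJ hIJ => horthb x hx I hI J hJ hIJ)]
  rw [key]
  have step : ∀ I ∈ F, ∑ x ∈ S, ‖ω I s - O x (ω I s)‖ ^ 2 ≤ 4 * h * ‖ω I s‖ ^ 2 := by
    intro I hI
    have hIS : I ⊆ S := Finset.mem_powerset.mp (Finset.mem_filter.mp hI).1
    have hcard : (I.card : ℝ) ≤ h := by
      exact_mod_cast (Finset.mem_filter.mp hI).2.2
    have : ∑ x ∈ S, ‖ω I s - O x (ω I s)‖ ^ 2 = ∑ x ∈ I, ‖ω I s - O x (ω I s)‖ ^ 2 := by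
      refine (Finset.sum_subset hIS fun x hxS hxI => ?_).symm
      rw [hb0 x hxS I hI hxI]
      simp
    rw [this]
    calc ∑ x ∈ I, ‖ω I s - O x (ω I s)‖ ^ 2 ≤ ∑ x ∈ I, 4 * ‖ω I s‖ ^ 2 :=
          Finset.sum_le_sum fun x hxI => hbnorm x (hIS hxI) I hI
      _ = I.card * (4 * ‖ω I s‖ ^ 2) := by rw [Finset.sum_const, nsmul_eq_mul]
      _ ≤ h * (4 * ‖ω I s‖ ^ 2) := by
          apply mul_le_mul_of_nonneg_right hcard
          positivity
      _ = 4 * h * ‖ω I s‖ ^ 2 := by ring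
  calc ∑ I ∈ F, ∑ x ∈ S, ‖ω I s - O x (ω I s)‖ ^ 2
      ≤ ∑ I ∈ F, 4 * h * ‖ω I s‖ ^ 2 := Finset.sum_le_sum step
    _ = 4 * h * ∑ I ∈ F, ‖ω I s‖ ^ 2 := by rw [Finset.mul_sum]
    _ = 4 * h * ‖s‖ ^ 2 := by rw [hpyth_s]
    _ ≤ 4 * h * 1 := by
        apply mul_le_mul_of_nonneg_left _ (by positivity)
        calc ‖s‖ ^ 2 ≤ 1 ^ 2 := pow_le_pow_left₀ (norm_nonneg _) hs 2
          _ = 1 := one_pow 2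
    _ = 4 * h := mul_one _
end

section
/- Let V be a real inner product space and suppose a family of linear isometries O_x (x in a finite set S) and isometries G_1, G_2, ... of V are given. Define s_k^x = G_k O_x G_{k-1} ⋯ G_1 O_x s and s_k = G_k ⋯ G_1 s for a fixed s with ‖s‖ ≤ 1, and D_k = ∑_{x∈S} ‖s_k^x − s_k‖². If ∑_{x∈S} ‖(id − O_x) t‖² ≤ 4h for all t with ‖t‖ ≤ 1, then D_k ≤ 4hk² for all k ≥ 0. -/
/-- Minkowski inequality for finite ℓ² sums of nonnegative reals. -/
lemma minkowski_aux {α : Type*} (S : Finset α) (a b : α → ℝ)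
    (ha : ∀ x, 0 ≤ a x) (hb : ∀ x, 0 ≤ b x) :
    Real.sqrt (∑ x ∈ S, (a x + b x) ^ 2) ≤
      Real.sqrt (∑ x ∈ S, a x ^ 2) + Real.sqrt (∑ x ∈ S, b x ^ 2) := by
  set A := Real.sqrt (∑ x ∈ S, a x ^ 2) with hA
  set B := Real.sqrt (∑ x ∈ S, b x ^ 2) with hB
  have hAnn : 0 ≤ A := Real.sqrt_nonneg _
  have hBnn : 0 ≤ B := Real.sqrt_nonneg _
  have hA2 : A ^ 2 = ∑ x ∈ S, a x ^ 2 :=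
    Real.sq_sqrt (Finset.sum_nonneg fun x _ => sq_nonneg _)
  have hB2 : B ^ 2 = ∑ x ∈ S, b x ^ 2 :=
    Real.sq_sqrt (Finset.sum_nonneg fun x _ => sq_nonneg _)
  have hsum_nn : 0 ≤ ∑ x ∈ S, a x * b x :=
    Finset.sum_nonneg fun x _ => mul_nonneg (ha x) (hb x)
  have hcs : ∑ x ∈ S, a x * b x ≤ A * B := by
    have h2 : (∑ x ∈ S, a x * b x) ^ 2 ≤ (A * B) ^ 2 := by
      rw [mul_pow, hA2, hB2]; exact Finset.sum_mul_sq_le_sq_mul_sq S a b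
    have h3 := Real.sqrt_le_sqrt h2
    rwa [Real.sqrt_sq hsum_nn, Real.sqrt_sq (mul_nonneg hAnn hBnn)] at h3
  have hexp : ∑ x ∈ S, (a x + b x) ^ 2
      = (∑ x ∈ S, a x ^ 2) + 2 * (∑ x ∈ S, a x * b x) + (∑ x ∈ S, b x ^ 2) := by
    rw [Finset.mul_sum, ← Finset.sum_add_distrib, ← Finset.sum_add_distrib]
    exact Finset.sum_congr rfl fun x _ => by ring
  have key : ∑ x ∈ S, (a x + b x) ^ 2 ≤ (A + B) ^ 2 := by
    rw [hexp]; nlinarith [hcs, hA2, hB2]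
  have h4 := Real.sqrt_le_sqrt key
  rwa [Real.sqrt_sq (add_nonneg hAnn hBnn)] at h4

/-- Inductive upper bound on the Grover progress measure: `D_k ≤ 4hk²`. -/
theorem stmt_7 {α : Type*} {V : Type*} [NormedAddCommGroup V] [InnerProductSpace ℝ V]
    (S : Finset α) (h : ℝ)
    (O : α → Module.End ℝ V) (G : ℕ → Module.End ℝ V)
    (hOiso : ∀ x ∈ S, ∀ v : V, ‖O x v‖ = ‖v‖)
    (hGiso : ∀ k, ∀ v : V, ‖G k v‖ = ‖v‖)
    (s : V) (hs : ‖s‖ ≤ 1)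
    (t : ℕ → α → V) (u : ℕ → V)
    (ht0 : ∀ x, t 0 x = s) (hu0 : u 0 = s)
    (htk : ∀ k x, t (k + 1) x = G (k + 1) (O x (t k x)))
    (huk : ∀ k, u (k + 1) = G (k + 1) (u k))
    (hbound : ∀ v : V, ‖v‖ ≤ 1 → ∑ x ∈ S, ‖v - O x v‖ ^ 2 ≤ 4 * h) :
    ∀ k : ℕ, ∑ x ∈ S, ‖t k x - u k‖ ^ 2 ≤ 4 * h * (k : ℝ) ^ 2 := by
  -- h is nonnegative
  have hh : 0 ≤ 4 * h := le_trans (Finset.sum_nonneg fun x _ => sq_nonneg _) (hbound 0 (by simp))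
  have hu_norm : ∀ k, ‖u k‖ ≤ 1 := by
    intro k; induction k with
    | zero => rw [hu0]; exact hs
    | succ n ih => rw [huk n, hGiso]; exact ih
  -- key claim: √D_k ≤ 2√h * k
  have key : ∀ k : ℕ, Real.sqrt (∑ x ∈ S, ‖t k x - u k‖ ^ 2) ≤ 2 * Real.sqrt h * k := by
    intro k
    induction k with
    | zero => simp [ht0, hu0]
    | succ n ih =>
      have step : ∀ x ∈ S, ‖t (n + 1) x - u (n + 1)‖ ≤ ‖t n x - u n‖ + ‖u n - O x (u n)‖ := by
        intro x hx
        rw [htk n x, huk n, ← map_sub, hGiso]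
        calc ‖O x (t n x) - u n‖
            = ‖O x (t n x - u n) + (O x (u n) - u n)‖ := by
              congr 1; rw [map_sub]; abel
          _ ≤ ‖O x (t n x - u n)‖ + ‖O x (u n) - u n‖ := norm_add_le _ _
          _ = ‖t n x - u n‖ + ‖u n - O x (u n)‖ := by
              rw [hOiso x hx, norm_sub_rev ((O x) (u n)) (u n)]
      have mono : ∑ x ∈ S, ‖t (n + 1) x - u (n + 1)‖ ^ 2
          ≤ ∑ x ∈ S, (‖t n x - u n‖ + ‖u n - O x (u n)‖) ^ 2 := by
        refine Finset.sum_le_sum fun x hx => ?_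
        exact pow_le_pow_left₀ (norm_nonneg _) (step x hx) 2
      have mk := minkowski_aux S (fun x => ‖t n x - u n‖) (fun x => ‖u n - O x (u n)‖)
        (fun x => norm_nonneg _) (fun x => norm_nonneg _)
      have hb : Real.sqrt (∑ x ∈ S, ‖u n - O x (u n)‖ ^ 2) ≤ 2 * Real.sqrt h := by
        have := hbound (u n) (hu_norm n)
        calc Real.sqrt (∑ x ∈ S, ‖u n - O x (u n)‖ ^ 2) ≤ Real.sqrt (4 * h) :=
              Real.sqrt_le_sqrt this
          _ = 2 * Real.sqrt h := by
              rw [show (4 : ℝ) * h = 2 ^ 2 * h by ring, Real.sqrt_mul (by positivity),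
                Real.sqrt_sq (by norm_num)]
      calc Real.sqrt (∑ x ∈ S, ‖t (n + 1) x - u (n + 1)‖ ^ 2)
          ≤ Real.sqrt (∑ x ∈ S, (‖t n x - u n‖ + ‖u n - O x (u n)‖) ^ 2) :=
            Real.sqrt_le_sqrt mono
        _ ≤ Real.sqrt (∑ x ∈ S, ‖t n x - u n‖ ^ 2)
              + Real.sqrt (∑ x ∈ S, ‖u n - O x (u n)‖ ^ 2) := mk
        _ ≤ 2 * Real.sqrt h * n + 2 * Real.sqrt h := add_le_add ih hb
        _ = 2 * Real.sqrt h * (n + 1 : ℕ) := by push_cast; ring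
  intro k
  have hk := key k
  have hnn : 0 ≤ ∑ x ∈ S, ‖t k x - u k‖ ^ 2 := Finset.sum_nonneg fun x _ => sq_nonneg _
  have := pow_le_pow_left₀ (Real.sqrt_nonneg _) hk 2
  rw [Real.sq_sqrt hnn] at this
  calc ∑ x ∈ S, ‖t k x - u k‖ ^ 2 ≤ (2 * Real.sqrt h * k) ^ 2 := this
    _ = 4 * (Real.sqrt h ^ 2) * (k : ℝ) ^ 2 := by ring
    _ = 4 * h * (k : ℝ) ^ 2 := by rw [Real.sq_sqrt (by linarith)]
end
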